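/- Let z_n → z strongly in Y and suppose S : U → Y is weak-to-weak continuous and compact. Then any sequence {u_n} of minimizers of E^{z_n} contains a subsequence converging weakly in U to a minimizer ū of E^z, and along this subsequence the states y_n = S(u_n) converge strongly in Y to ȳ = S(ū). -/

import Mathlib

open MeasureTheory Set Filter Topology

noncomputable section

abbrev Vec (k : ℕ) := EuclideanSpace ℝ (Fin k)

/-- Weak convergence of a sequence in a real inner product space. -/
def WeakTendsto {X : Type*} [NormedAddCommGroup X] [InnerProductSpace ℝ X]
    (u : ℕ → X) (l : X) : Prop :=
  ∀ w : X, Tendsto (fun i => (inner ℝ (u i) w : ℝ)) atTop (nhds (inner ℝ l w : ℝ))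

/-- Convexity for extended-real-valued functions. -/
def EConvexOn {X : Type*} [AddCommGroup X] [Module ℝ X] (g : X → EReal) : Prop :=
  ∀ x y : X, ∀ a b : ℝ, 0 ≤ a → 0 ≤ b → a + b = 1 →
    g (a • x + b • y) ≤ (a : EReal) * g x + (b : EReal) * g y

/-- Properness for extended-real-valued functions. -/
def EProper {X : Type*} (g : X → EReal) : Prop :=
  (∃ v, g v ≠ ⊤) ∧ ∀ v, g v ≠ ⊥

open Classical in
/-- The integral functional `u ↦ ∫ g(u x) dμ`, valued in `EReal`. -/
def intG {α : Type*} [MeasurableSpace α] (μ : Measure α) {k : ℕ} (g : Vec k → EReal)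
    (u : α → Vec k) : EReal :=
  if (∀ᵐ x ∂μ, g (u x) ≠ ⊤) ∧ Integrable (fun x => (g (u x)).toReal) μ
  then (((∫ x, (g (u x)).toReal ∂μ : ℝ) : EReal)) else ⊤

/-- The Tikhonov-type energy `u ↦ ½‖S u − z‖² + ∫ g(u x) dμ`. -/
def energy {α : Type*} [MeasurableSpace α] (μ : Measure α) {k : ℕ} {Y : Type*}
    [NormedAddCommGroup Y]
    (S : Lp (Vec k) 2 μ → Y) (z : Y) (g : Vec k → EReal) (u : Lp (Vec k) 2 μ) : EReal :=
  (((1/2 : ℝ) * ‖S u - z‖^2 : ℝ) : EReal) + intG μ g (fun x => u x)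

/-- The convex subdifferential of an extended-real-valued function on a real inner
product space. -/
def ESubdiff {X : Type*} [NormedAddCommGroup X] [InnerProductSpace ℝ X]
    (f : X → EReal) (u : X) : Set X :=
  {p | ∀ v, f u + ((inner ℝ p (v - u) : ℝ) : EReal) ≤ f v}

/-- The Fenchel (Legendre–Fenchel) conjugate of an extended-real-valued function on a
real inner product space. -/
def EConj {X : Type*} [NormedAddCommGroup X] [InnerProductSpace ℝ X]
    (f : X → EReal) (p : X) : EReal :=
  ⨆ v, ((inner ℝ p v : ℝ) : EReal) - f v

/-! Minimizers of `E^{z_i}` take values in the compact set `dom g = co M` almost everywhere, so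
they are bounded in `L²` and a subsequence converges weakly; compactness of `S` makes the states
converge strongly. The functional `u ↦ ∫ g(u)` is lower semicontinuous on `L²` (Fatou) and has
convex sublevel sets, hence it is weakly sequentially lower semicontinuous (Mazur). Therefore
`E^z(ū) ≤ liminf E^{z_i}(u_i) ≤ liminf E^{z_i}(v) = E^z(v)` for every `v`. -/

open scoped ENNReal

theorem EReal.continuous_add_coe (c : ℝ) : Continuous fun e : EReal => e + c :=
  continuous_iff_continuousAt.2 fun _ =>
    (EReal.continuousAt_add (Or.inr (EReal.coe_ne_bot _)) (Or.inr (EReal.coe_ne_top _))).comp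
      (continuous_id.prodMk continuous_const).continuousAt

theorem EReal.continuous_sub_coe (c : ℝ) : Continuous fun e : EReal => e - c := by
  simpa only [sub_eq_add_neg, ← EReal.coe_neg] using EReal.continuous_add_coe (-c)

theorem EReal.coe_le_toReal {c : ℝ} {e : EReal} (hc : (c : EReal) ≤ e) (he : e ≠ ⊤) :
    c ≤ e.toReal := by
  simpa using EReal.toReal_le_toReal hc (EReal.coe_ne_bot c) he

theorem EReal.toENNReal_sub_coe {c : ℝ} {e : EReal} (hc : (c : EReal) ≤ e) (he : e ≠ ⊤) :
    (e - c).toENNReal = ENNReal.ofReal (e.toReal - c) := by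
  induction e using EReal.rec with
  | bot => exact absurd hc (by simp)
  | top => exact absurd rfl he
  | coe r => rw [← EReal.coe_sub, EReal.toENNReal_of_ne_top (EReal.coe_ne_top _), EReal.toReal_coe,
      EReal.toReal_coe]

theorem EConvexOn.convexOn_toReal {X : Type*} [AddCommGroup X] [Module ℝ X] {g : X → EReal}
    (hconv : EConvexOn g) (hbot : ∀ v, g v ≠ ⊥) :
    ConvexOn ℝ {v | g v ≠ ⊤} fun v => (g v).toReal := by
  have hcoe : ∀ v, g v ≠ ⊤ → g v = ((g v).toReal : EReal) := fun v hv =>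
    (EReal.coe_toReal hv (hbot v)).symm
  have hcomb : ∀ x ∈ {v | g v ≠ ⊤}, ∀ y ∈ {v | g v ≠ ⊤}, ∀ a b : ℝ, 0 ≤ a → 0 ≤ b → a + b = 1 →
      g (a • x + b • y) ≤ ((a * (g x).toReal + b * (g y).toReal : ℝ) : EReal) := by
    intro x hx y hy a b ha hb hab
    have h := hconv x y a b ha hb hab
    rwa [hcoe x hx, hcoe y hy, ← EReal.coe_mul, ← EReal.coe_mul, ← EReal.coe_add] at h
  refine ⟨fun x hx y hy a b ha hb hab => ?_, fun x hx y hy a b ha hb hab => ?_⟩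
  · exact ne_top_of_le_ne_top (EReal.coe_ne_top _) (hcomb x hx y hy a b ha hb hab)
  · have h := hcomb x hx y hy a b ha hb hab
    rw [hcoe _ (ne_top_of_le_ne_top (EReal.coe_ne_top _) h)] at h
    exact_mod_cast h

theorem LowerSemicontinuous.exists_coe_le_of_isCompact {X : Type*} [TopologicalSpace X]
    {g : X → EReal} (hg : LowerSemicontinuous g) (hbot : ∀ v, g v ≠ ⊥)
    (hK : IsCompact {v | g v ≠ ⊤}) : ∃ c : ℝ, ∀ v, (c : EReal) ≤ g v := by
  rcases {v | g v ≠ ⊤}.eq_empty_or_nonempty with hempty | hne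
  · refine ⟨0, fun v => ?_⟩
    have hv : g v = ⊤ := by simpa using Set.eq_empty_iff_forall_notMem.1 hempty v
    simp [hv]
  · obtain ⟨v₀, hv₀, hmin⟩ := (hg.lowerSemicontinuousOn _).exists_isMinOn hne hK
    refine ⟨(g v₀).toReal, fun v => ?_⟩
    rw [EReal.coe_toReal hv₀ (hbot v₀)]
    by_cases hv : g v = ⊤
    · simp [hv]
    · exact hmin hv

section Weak

variable {H : Type*} [NormedAddCommGroup H] [InnerProductSpace ℝ H] [CompleteSpace H]

theorem WeakTendsto.tendsto_apply {u : ℕ → H} {l : H} (hu : WeakTendsto u l) (f : StrongDual ℝ H) :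
    Tendsto (fun i => f (u i)) atTop (𝓝 (f l)) := by
  have hf : ∀ w, f w = inner ℝ ((InnerProductSpace.toDual ℝ H).symm f) w := fun w =>
    (InnerProductSpace.toDual_symm_apply).symm
  simp only [hf, real_inner_comm _ ((InnerProductSpace.toDual ℝ H).symm f)]
  exact hu _

theorem WeakTendsto.mem_of_frequently {u : ℕ → H} {l : H} {K : Set H} (hu : WeakTendsto u l)
    (hK : Convex ℝ K) (hKc : IsClosed K) (h : ∃ᶠ i in atTop, u i ∈ K) : l ∈ K := by
  by_contra hl
  obtain ⟨f, s, hfK, hfl⟩ := geometric_hahn_banach_closed_point hK hKc hl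
  have hfar : ∀ᶠ i in atTop, s < f (u i) := (hu.tendsto_apply f).eventually_const_lt hfl
  exact (h.and_eventually hfar).exists.elim fun i hi => (hfK _ hi.1).not_gt hi.2

theorem WeakTendsto.le_liminf {β : Type*} [CompleteLinearOrder β] [DenselyOrdered β]
    [TopologicalSpace β] [OrderTopology β] {J : H → β} (hJ : LowerSemicontinuous J)
    (hJc : QuasiconvexOn ℝ univ J) {u : ℕ → H} {l : H} (hu : WeakTendsto u l) :
    J l ≤ liminf (fun i => J (u i)) atTop := by
  refine le_of_forall_gt_imp_ge_of_dense fun y hy => ?_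
  have hK : Convex ℝ {x | J x ≤ y} := by simpa using hJc y
  exact hu.mem_of_frequently hK (hJ.isClosed_preimage y)
    ((frequently_lt_of_liminf_lt (by isBoundedDefault) hy).mono fun _ hi => le_of_lt hi)

theorem exists_weakTendsto_subseq [TopologicalSpace.SeparableSpace H] {u : ℕ → H} {R : ℝ}
    (hR : ∀ i, ‖u i‖ ≤ R) : ∃ φ : ℕ → ℕ, StrictMono φ ∧ ∃ l : H, WeakTendsto (u ∘ φ) l := by
  let ψ : ℕ → WeakDual ℝ H := fun i => StrongDual.toWeakDual (InnerProductSpace.toDual ℝ H (u i))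
  have hψ : ∀ i, ψ i ∈ WeakDual.toStrongDual ⁻¹' Metric.closedBall 0 R := fun i => by
    simpa [ψ] using hR i
  obtain ⟨a, -, φ, hφ, ha⟩ := WeakDual.isSeqCompact_closedBall ℝ H 0 R hψ
  refine ⟨φ, hφ, (InnerProductSpace.toDual ℝ H).symm (WeakDual.toStrongDual a), fun w => ?_⟩
  rw [tendsto_iff_forall_eval_tendsto_topDualPairing] at ha
  rw [InnerProductSpace.toDual_symm_apply]
  exact ha w

end Weak

theorem lowerSemicontinuous_lintegral_Lp {α E : Type*} [MeasurableSpace α] {μ : Measure α}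
    [NormedAddCommGroup E] [MeasurableSpace E] [BorelSpace E] {p : ℝ≥0∞} [Fact (1 ≤ p)]
    {h : E → ℝ≥0∞} (hh : LowerSemicontinuous h) :
    LowerSemicontinuous fun u : Lp E p μ => ∫⁻ x, h (u x) ∂μ := by
  intro l y hy
  by_contra hfar
  obtain ⟨w, hwl, hwy⟩ := exists_seq_forall_of_frequently (not_eventually.1 hfar)
  obtain ⟨ns, -, hns⟩ := (tendstoInMeasure_of_tendsto_Lp hwl).exists_seq_tendsto_ae
  have hpt : ∀ᵐ x ∂μ, h (l x) ≤ liminf (fun j => h (w (ns j) x)) atTop :=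
    hns.mono fun x hx => (hh.le_liminf _).trans (hx.liminf_le_liminf_comp (u := h))
  refine hy.not_ge ?_
  calc ∫⁻ x, h (l x) ∂μ
      ≤ ∫⁻ x, liminf (fun j => h (w (ns j) x)) atTop ∂μ := lintegral_mono_ae hpt
    _ ≤ liminf (fun j => ∫⁻ x, h (w (ns j) x) ∂μ) atTop :=
      lintegral_liminf_le' fun j =>
        hh.measurable.comp_aemeasurable (Lp.aestronglyMeasurable _).aemeasurable
    _ ≤ y := liminf_le_of_frequently_le' (Frequently.of_forall fun j => not_lt.1 (hwy (ns j)))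

section IntegralFunctional

variable {α : Type*} [MeasurableSpace α] {μ : Measure α} {k : ℕ} {g : Vec k → EReal}

theorem intG_ne_bot (u : α → Vec k) : intG μ g u ≠ ⊥ := by
  unfold intG
  split_ifs <;> simp

theorem intG_ne_top_iff {u : α → Vec k} : intG μ g u ≠ ⊤ ↔
    (∀ᵐ x ∂μ, g (u x) ≠ ⊤) ∧ Integrable (fun x => (g (u x)).toReal) μ := by
  unfold intG
  split_ifs with h <;> simp [h]

theorem intG_eq_integral {u : α → Vec k} (h : intG μ g u ≠ ⊤) :
    intG μ g u = ((∫ x, (g (u x)).toReal ∂μ : ℝ) : EReal) := by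
  rw [intG, if_pos (intG_ne_top_iff.1 h)]

theorem intG_congr_ae {u v : α → Vec k} (h : u =ᵐ[μ] v) : intG μ g u = intG μ g v := by
  have hg : (fun x => g (u x)) =ᵐ[μ] fun x => g (v x) := h.fun_comp g
  have hgr : (fun x => (g (u x)).toReal) =ᵐ[μ] fun x => (g (v x)).toReal :=
    h.fun_comp fun w => (g w).toReal
  have hcond : ((∀ᵐ x ∂μ, g (u x) ≠ ⊤) ∧ Integrable (fun x => (g (u x)).toReal) μ) ↔
      ((∀ᵐ x ∂μ, g (v x) ≠ ⊤) ∧ Integrable (fun x => (g (v x)).toReal) μ) :=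
    and_congr (eventually_congr (hg.mono fun x hx => by simp only [hx]))
      (integrable_congr hgr)
  by_cases hu : (∀ᵐ x ∂μ, g (u x) ≠ ⊤) ∧ Integrable (fun x => (g (u x)).toReal) μ
  · rw [intG, intG, if_pos hu, if_pos (hcond.1 hu), integral_congr_ae hgr]
  · rw [intG, intG, if_neg hu, if_neg (hcond.not.1 hu)]

variable [IsFiniteMeasure μ] {p : ℝ≥0∞}

theorem intG_Lp_const_ne_top {v : Vec k} (hv : g v ≠ ⊤) :
    intG μ g (Lp.const p μ v) ≠ ⊤ :=
  (intG_congr_ae (Lp.coeFn_const p μ v)).trans_ne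
    (intG_ne_top_iff.2 ⟨Eventually.of_forall fun _ => hv, integrable_const (g v).toReal⟩)

theorem norm_le_of_intG_ne_top {R : ℝ} (hR0 : 0 ≤ R) (hR : ∀ v, g v ≠ ⊤ → ‖v‖ ≤ R)
    {u : Lp (Vec k) p μ} (hu : intG μ g u ≠ ⊤) :
    ‖u‖ ≤ measureUnivNNReal μ ^ p.toReal⁻¹ * R :=
  Lp.norm_le_of_ae_bound hR0 ((intG_ne_top_iff.1 hu).1.mono fun _ hx => hR _ hx)

-- Also when `intG μ g u = ⊤`: a function bounded below with finite lower integral is integrable.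
theorem intG_eq_lintegral {c : ℝ} (hg : Measurable g) (hc : ∀ v, (c : EReal) ≤ g v)
    {u : α → Vec k} (hu : AEMeasurable u μ) :
    intG μ g u =
      ((∫⁻ x, (g (u x) - c).toENNReal ∂μ : ℝ≥0∞) : EReal) + ((c * μ.real univ : ℝ) : EReal) := by
  have hmeas : AEMeasurable (fun x => (g (u x) - c).toENNReal) μ :=
    (((EReal.continuous_sub_coe c).measurable.comp hg).ereal_toENNReal).comp_aemeasurable hu
  by_cases hJ : intG μ g u = ⊤
  · suffices hinf : ∫⁻ x, (g (u x) - c).toENNReal ∂μ = ⊤ by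
      rw [hJ, hinf, EReal.coe_ennreal_top, EReal.top_add_coe]
    by_contra hfin
    have hdom : ∀ᵐ x ∂μ, g (u x) ≠ ⊤ := (ae_lt_top' hmeas hfin).mono fun x hx htop =>
      hx.ne (by rw [htop, EReal.top_sub_coe, EReal.toENNReal_top])
    refine intG_ne_top_iff.2 ⟨hdom, ?_⟩ hJ
    refine ((integrable_toReal_of_lintegral_ne_top hmeas hfin).add (integrable_const c)).congr
      (hdom.mono fun x hx => ?_)
    simp [EReal.toENNReal_sub_coe (hc _) hx,
      ENNReal.toReal_ofReal (sub_nonneg.2 (EReal.coe_le_toReal (hc _) hx))]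
  · obtain ⟨hdom, hint⟩ := intG_ne_top_iff.1 hJ
    have hint' : Integrable (fun x => (g (u x)).toReal - c) μ := hint.sub (integrable_const c)
    have hnonneg : 0 ≤ᵐ[μ] fun x => (g (u x)).toReal - c :=
      hdom.mono fun x hx => sub_nonneg.2 (EReal.coe_le_toReal (hc _) hx)
    rw [intG_eq_integral hJ,
      lintegral_congr_ae (hdom.mono fun x hx => EReal.toENNReal_sub_coe (hc _) hx),
      ← ofReal_integral_eq_lintegral_ofReal hint' hnonneg, EReal.coe_ennreal_ofReal,
      max_eq_left (integral_nonneg_of_ae hnonneg), ← EReal.coe_add,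
      integral_sub hint (integrable_const c), integral_const, smul_eq_mul]
    ring_nf

theorem lowerSemicontinuous_intG [Fact (1 ≤ p)] {c : ℝ} (hg : LowerSemicontinuous g)
    (hc : ∀ v, (c : EReal) ≤ g v) :
    LowerSemicontinuous fun u : Lp (Vec k) p μ => intG μ g u := by
  have hshift : Continuous fun t : ℝ≥0∞ => (t : EReal) + ((c * μ.real univ : ℝ) : EReal) :=
    (EReal.continuous_add_coe _).comp continuous_coe_ennreal_ereal
  have hh : LowerSemicontinuous fun v => (g v - c).toENNReal :=
    EReal.continuous_toENNReal.comp_lowerSemicontinuous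
      ((EReal.continuous_sub_coe c).comp_lowerSemicontinuous hg
        fun _ _ h => EReal.sub_le_sub h le_rfl)
      fun _ _ h => EReal.toENNReal_le_toENNReal h
  simp only [intG_eq_lintegral hg.measurable hc (Lp.aestronglyMeasurable _).aemeasurable]
  exact hshift.comp_lowerSemicontinuous (lowerSemicontinuous_lintegral_Lp hh)
    fun _ _ h => add_le_add (EReal.coe_ennreal_le_coe_ennreal_iff.2 h) le_rfl

theorem intG_smul_add_le (hconv : EConvexOn g) (hbot : ∀ v, g v ≠ ⊥) (hg : Measurable g) {c : ℝ}
    (hc : ∀ v, (c : EReal) ≤ g v) {u v : α → Vec k} (hu : AEMeasurable u μ)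
    (hv : AEMeasurable v μ) (hJu : intG μ g u ≠ ⊤) (hJv : intG μ g v ≠ ⊤) {a b : ℝ} (ha : 0 ≤ a)
    (hb : 0 ≤ b) (hab : a + b = 1) :
    intG μ g (a • u + b • v) ≤ a * intG μ g u + b * intG μ g v := by
  have hG := hconv.convexOn_toReal hbot
  obtain ⟨hdu, hiu⟩ := intG_ne_top_iff.1 hJu
  obtain ⟨hdv, hiv⟩ := intG_ne_top_iff.1 hJv
  have hpt : ∀ᵐ x ∂μ, g ((a • u + b • v) x) ≠ ⊤ ∧
      (g ((a • u + b • v) x)).toReal ≤ a * (g (u x)).toReal + b * (g (v x)).toReal := by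
    filter_upwards [hdu, hdv] with x hx hy
    exact ⟨hG.1 hx hy ha hb hab, hG.2 hx hy ha hb hab⟩
  have hiuv : Integrable (fun x => a * (g (u x)).toReal + b * (g (v x)).toReal) μ :=
    (hiu.const_mul a).add (hiv.const_mul b)
  have hiw : Integrable (fun x => (g ((a • u + b • v) x)).toReal) μ :=
    integrable_of_le_of_le
      (hg.ereal_toReal.comp_aemeasurable
        ((hu.const_smul a).add (hv.const_smul b))).aestronglyMeasurable
      (hpt.mono fun x hx => EReal.coe_le_toReal (hc _) hx.1) (hpt.mono fun x hx => hx.2)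
      (integrable_const c) hiuv
  have hJw : intG μ g (a • u + b • v) ≠ ⊤ := intG_ne_top_iff.2 ⟨hpt.mono fun x hx => hx.1, hiw⟩
  rw [intG_eq_integral hJw, intG_eq_integral hJu, intG_eq_integral hJv, ← EReal.coe_mul,
    ← EReal.coe_mul, ← EReal.coe_add, EReal.coe_le_coe_iff, ← integral_const_mul,
    ← integral_const_mul, ← integral_add (hiu.const_mul a) (hiv.const_mul b)]
  exact integral_mono_ae hiw hiuv (hpt.mono fun x hx => hx.2)

theorem quasiconvexOn_intG (hconv : EConvexOn g) (hbot : ∀ v, g v ≠ ⊥) (hg : Measurable g) {c : ℝ}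
    (hc : ∀ v, (c : EReal) ≤ g v) [Fact (1 ≤ p)] :
    QuasiconvexOn ℝ univ fun u : Lp (Vec k) p μ => intG μ g u := by
  intro r
  induction r using EReal.rec with
  | bot => simpa [intG_ne_bot] using convex_empty
  | top => simpa using convex_univ
  | coe r =>
    rintro u ⟨-, hu : intG μ g u ≤ r⟩ v ⟨-, hv : intG μ g v ≤ r⟩ a b ha hb hab
    refine ⟨mem_univ _, show intG μ g ⇑(a • u + b • v) ≤ r from ?_⟩
    have hcomb : ⇑(a • u + b • v) =ᵐ[μ] a • ⇑u + b • ⇑v := by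
      filter_upwards [Lp.coeFn_add (a • u) (b • v), Lp.coeFn_smul a u, Lp.coeFn_smul b v]
        with x h1 h2 h3
      simp only [h1, Pi.add_apply, h2, h3]
    have hJu := ne_top_of_le_ne_top (EReal.coe_ne_top r) hu
    have hJv := ne_top_of_le_ne_top (EReal.coe_ne_top r) hv
    rw [intG_eq_integral hJu, EReal.coe_le_coe_iff] at hu
    rw [intG_eq_integral hJv, EReal.coe_le_coe_iff] at hv
    calc intG μ g ⇑(a • u + b • v) = intG μ g (a • ⇑u + b • ⇑v) := intG_congr_ae hcomb
      _ ≤ a * intG μ g u + b * intG μ g v :=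
        intG_smul_add_le hconv hbot hg hc (Lp.aestronglyMeasurable u).aemeasurable
          (Lp.aestronglyMeasurable v).aemeasurable hJu hJv ha hb hab
      _ = ((a * ∫ x, (g (u x)).toReal ∂μ) + b * ∫ x, (g (v x)).toReal ∂μ : ℝ) := by
        rw [intG_eq_integral hJu, intG_eq_integral hJv]; push_cast; rfl
      _ ≤ r := EReal.coe_le_coe_iff.2 (by
        linarith [mul_le_mul_of_nonneg_left hu ha, mul_le_mul_of_nonneg_left hv hb,
          show a * r + b * r = r by rw [← add_mul, hab, one_mul]])

end IntegralFunctional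

section Energy

variable {α : Type*} [MeasurableSpace α] {μ : Measure α} {k : ℕ} {g : Vec k → EReal}
  {Y : Type*} [NormedAddCommGroup Y] {S : Lp (Vec k) 2 μ → Y}

theorem energy_ne_top_iff {z : Y} {u : Lp (Vec k) 2 μ} :
    energy μ S z g u ≠ ⊤ ↔ intG μ g u ≠ ⊤ := by
  refine ⟨fun h hJ => h ?_, fun h => ?_⟩
  · rw [energy, hJ, EReal.coe_add_top]
  · rw [energy, intG_eq_integral h, ← EReal.coe_add]
    exact EReal.coe_ne_top _

theorem tendsto_energy {z : ℕ → Y} {zbar : Y} (hz : Tendsto z atTop (𝓝 zbar))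
    (v : Lp (Vec k) 2 μ) :
    Tendsto (fun i => energy μ S (z i) g v) atTop (𝓝 (energy μ S zbar g v)) :=
  (EReal.continuousAt_add (Or.inl (EReal.coe_ne_top _)) (Or.inl (EReal.coe_ne_bot _))).tendsto.comp
    (((continuous_coe_real_ereal.tendsto _).comp
      (((tendsto_const_nhds.sub hz).norm.pow 2).const_mul _)).prodMk_nhds tendsto_const_nhds)

theorem le_liminf_energy {u : ℕ → Lp (Vec k) 2 μ} {ubar : Lp (Vec k) 2 μ} {z : ℕ → Y} {zbar : Y}
    (hS : Tendsto (fun i => S (u i)) atTop (𝓝 (S ubar))) (hz : Tendsto z atTop (𝓝 zbar))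
    (hJ : intG μ g ubar ≤ liminf (fun i => intG μ g (u i)) atTop) :
    energy μ S zbar g ubar ≤ liminf (fun i => energy μ S (z i) g (u i)) atTop := by
  have hfid : Tendsto (fun i => (((1/2 : ℝ) * ‖S (u i) - z i‖ ^ 2 : ℝ) : EReal)) atTop
      (𝓝 (((1/2 : ℝ) * ‖S ubar - zbar‖ ^ 2 : ℝ) : EReal)) :=
    (continuous_coe_real_ereal.tendsto _).comp (((hS.sub hz).norm.pow 2).const_mul _)
  calc energy μ S zbar g ubar
      ≤ liminf (fun i => (((1/2 : ℝ) * ‖S (u i) - z i‖ ^ 2 : ℝ) : EReal)) atTop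
        + liminf (fun i => intG μ g (u i)) atTop := by
        rw [hfid.liminf_eq]
        exact add_le_add le_rfl hJ
    _ ≤ liminf (fun i => energy μ S (z i) g (u i)) atTop := EReal.le_liminf_add

end Energy

theorem forall_le_of_le_liminf_of_isMin {X β : Type*} [CompleteLinearOrder β] [TopologicalSpace β]
    [OrderTopology β] {F : ℕ → X → β} {G : X → β} {x : ℕ → X} {xbar : X}
    (hmin : ∀ k v, F k (x k) ≤ F k v) (hF : ∀ v, Tendsto (fun k => F k v) atTop (𝓝 (G v)))
    (hxbar : G xbar ≤ liminf (fun k => F k (x k)) atTop) (v : X) : G xbar ≤ G v :=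
  hxbar.trans <| (liminf_le_liminf (Eventually.of_forall fun k => hmin k v)).trans_eq
    (hF v).liminf_eq

theorem stability_of_control_and_state_general
    {n m : ℕ}
    (Ω : Set (Vec n)) (hΩbdd : Bornology.IsBounded Ω)
    {Y : Type*} [NormedAddCommGroup Y] [InnerProductSpace ℝ Y] [CompleteSpace Y]
    (M : Finset (Vec m)) (g : Vec m → EReal)
    (hproper : EProper g) (hconv : EConvexOn g) (hlsc : LowerSemicontinuous g)
    (hdom : {v | g v ≠ ⊤} = convexHull ℝ (M : Set (Vec m)))
    (S : Lp (Vec m) 2 (volume.restrict Ω) → Y)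
    -- compactness: weakly convergent sequences are mapped to strongly convergent ones
    (hScpt : ∀ (u : ℕ → Lp (Vec m) 2 (volume.restrict Ω)) (l : Lp (Vec m) 2 (volume.restrict Ω)),
      WeakTendsto u l → Tendsto (fun i => ‖S (u i) - S l‖) atTop (nhds (0:ℝ)))
    (z : ℕ → Y) (zbar : Y) (hz : Tendsto (fun i => ‖z i - zbar‖) atTop (nhds (0:ℝ)))
    (u : ℕ → Lp (Vec m) 2 (volume.restrict Ω))
    (hu : ∀ i, ∀ v, energy (volume.restrict Ω) S (z i) g (u i) ≤
      energy (volume.restrict Ω) S (z i) g v) :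
    ∃ φ : ℕ → ℕ, StrictMono φ ∧ ∃ ubar : Lp (Vec m) 2 (volume.restrict Ω),
      (∀ v, energy (volume.restrict Ω) S zbar g ubar ≤ energy (volume.restrict Ω) S zbar g v) ∧
      WeakTendsto (fun k => u (φ k)) ubar ∧
      Tendsto (fun k => ‖S (u (φ k)) - S ubar‖) atTop (nhds (0:ℝ)) := by
  have : IsFiniteMeasure (volume.restrict Ω) := isFiniteMeasure_restrict.2 hΩbdd.measure_lt_top.ne
  have : Fact ((2 : ℝ≥0∞) ≠ ∞) := ⟨ENNReal.ofNat_ne_top⟩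
  have hK : IsCompact {v | g v ≠ ⊤} := hdom ▸ M.finite_toSet.isCompact_convexHull ℝ
  obtain ⟨c, hc⟩ := hlsc.exists_coe_le_of_isCompact hproper.2 hK
  obtain ⟨R, hR⟩ := hK.isBounded.exists_norm_le
  obtain ⟨v₀, hv₀⟩ := hproper.1
  have hJu : ∀ i, intG (volume.restrict Ω) g (u i) ≠ ⊤ := fun i => energy_ne_top_iff.1 <|
    ne_top_of_le_ne_top (energy_ne_top_iff.2 (intG_Lp_const_ne_top hv₀)) (hu i (Lp.const _ _ v₀))
  obtain ⟨φ, hφ, ubar, hweak⟩ := exists_weakTendsto_subseq fun i =>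
    norm_le_of_intG_ne_top ((norm_nonneg v₀).trans (hR v₀ hv₀)) hR (hJu i)
  have hstate := hScpt _ _ hweak
  have hz' : Tendsto (fun k => z (φ k)) atTop (𝓝 zbar) :=
    (tendsto_iff_norm_sub_tendsto_zero.2 hz).comp hφ.tendsto_atTop
  have hlscJ : LowerSemicontinuous fun v : Lp (Vec m) 2 (volume.restrict Ω) =>
      intG (volume.restrict Ω) g v := lowerSemicontinuous_intG hlsc hc
  have hqcJ : QuasiconvexOn ℝ univ fun v : Lp (Vec m) 2 (volume.restrict Ω) =>
      intG (volume.restrict Ω) g v := quasiconvexOn_intG hconv hproper.2 hlsc.measurable hc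
  have hmin := le_liminf_energy (S := S) (tendsto_iff_norm_sub_tendsto_zero.2 hstate) hz'
    (hweak.le_liminf hlscJ hqcJ)
  exact ⟨φ, hφ, ubar, forall_le_of_le_liminf_of_isMin (fun k => hu (φ k)) (tendsto_energy hz') hmin,
    hweak, hstate⟩

/-- stability of control and state: if `z_n → z` in `Y` and `S` is
weak-to-weak continuous and compact, then any sequence of minimizers of `E^{z_n}` has a
subsequence converging weakly in `U` to a minimizer `ū` of `E^z`, and along it the states
`S(u_n)` converge strongly in `Y` to `S(ū)`. -/
theorem stability_of_control_and_state
    {n m : ℕ} (hm : 2 ≤ m)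
    (Ω : Set (Vec n)) (hΩopen : IsOpen Ω) (hΩbdd : Bornology.IsBounded Ω)
    {Y : Type*} [NormedAddCommGroup Y] [InnerProductSpace ℝ Y] [CompleteSpace Y]
    (M : Finset (Vec m)) (g : Vec m → EReal)
    (hproper : EProper g) (hconv : EConvexOn g) (hlsc : LowerSemicontinuous g)
    (hdom : {v | g v ≠ ⊤} = convexHull ℝ (M : Set (Vec m)))
    (S : Lp (Vec m) 2 (volume.restrict Ω) → Y)
    -- weak-to-weak continuity
    (hS : ∀ (u : ℕ → Lp (Vec m) 2 (volume.restrict Ω)) (l : Lp (Vec m) 2 (volume.restrict Ω)),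
      WeakTendsto u l → WeakTendsto (fun i => S (u i)) (S l))
    -- compactness: weakly convergent sequences are mapped to strongly convergent ones
    (hScpt : ∀ (u : ℕ → Lp (Vec m) 2 (volume.restrict Ω)) (l : Lp (Vec m) 2 (volume.restrict Ω)),
      WeakTendsto u l → Tendsto (fun i => ‖S (u i) - S l‖) atTop (nhds (0:ℝ)))
    (z : ℕ → Y) (zbar : Y) (hz : Tendsto (fun i => ‖z i - zbar‖) atTop (nhds (0:ℝ)))
    (u : ℕ → Lp (Vec m) 2 (volume.restrict Ω))
    (hu : ∀ i, ∀ v, energy (volume.restrict Ω) S (z i) g (u i) ≤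
      energy (volume.restrict Ω) S (z i) g v) :
    ∃ φ : ℕ → ℕ, StrictMono φ ∧ ∃ ubar : Lp (Vec m) 2 (volume.restrict Ω),
      (∀ v, energy (volume.restrict Ω) S zbar g ubar ≤ energy (volume.restrict Ω) S zbar g v) ∧
      WeakTendsto (fun k => u (φ k)) ubar ∧
      Tendsto (fun k => ‖S (u (φ k)) - S ubar‖) atTop (nhds (0:ℝ)) :=
  stability_of_control_and_state_general Ω hΩbdd M g hproper hconv hlsc hdom S hScpt z zbar hz u hu
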